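/- Let Γ be a connected arc-transitive digraph with Property Z whose in-valency and out-valency are both prime numbers. If the pointwise stabilizer G_{(Γ_0)} of the fibre Γ_0 in G = Aut(Γ) is non-trivial, then Γ is highly-arc-transitive. -/

import Mathlib

variable {V : Type*}

/-- The automorphism group of a digraph given by its arc relation `E`. -/
def autGroup (E : V → V → Prop) : Subgroup (Equiv.Perm V) where
  carrier := {g | ∀ u v : V, E u v ↔ E (g u) (g v)}
  one_mem' := by intro u v; simp
  mul_mem' := by
    intro a b ha hb u v
    simpa [Equiv.Perm.mul_apply] using (hb u v).trans (ha (b u) (b v))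
  inv_mem' := by
    intro a ha u v
    simpa using (ha (a⁻¹ u) (a⁻¹ v)).symm

/-- Connectedness of a digraph (in the underlying undirected sense). -/
def DConnected (E : V → V → Prop) : Prop :=
  ∀ u v : V, Relation.ReflTransGen (fun a b => E a b ∨ E b a) u v

/-- `f : Fin (k+1) → V` is a `k`-arc. -/
def IsKArc (E : V → V → Prop) (k : ℕ) (f : Fin (k + 1) → V) : Prop :=
  ∀ i : Fin k, E (f i.castSucc) (f i.succ)

def KArcTransitive (E : V → V → Prop) (k : ℕ) : Prop :=
  ∀ f g : Fin (k + 1) → V, IsKArc E k f → IsKArc E k g →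
    ∃ a ∈ autGroup E, ∀ i, (a : Equiv.Perm V) (f i) = g i

def HighlyArcTransitive (E : V → V → Prop) : Prop :=
  ∀ k : ℕ, KArcTransitive E k

def VertexTransitive (E : V → V → Prop) : Prop :=
  ∀ u v : V, ∃ a ∈ autGroup E, (a : Equiv.Perm V) u = v

def ArcTransitive (E : V → V → Prop) : Prop :=
  ∀ u v x y : V, E u v → E x y →
    ∃ a ∈ autGroup E, (a : Equiv.Perm V) u = x ∧ (a : Equiv.Perm V) v = y

/-- Reachability in the underlying undirected graph avoiding the vertex set `S`. -/
def ReachAvoid (E : V → V → Prop) (S : Set V) : V → V → Prop :=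
  Relation.ReflTransGen (fun a b => (E a b ∨ E b a) ∧ a ∉ S ∧ b ∉ S)

/-- `u` lies in an infinite component of the complement of `S`. -/
def InfComp (E : V → V → Prop) (S : Set V) (u : V) : Prop :=
  u ∉ S ∧ {w | ReachAvoid E S u w}.Infinite

/-- A connected digraph with exactly two ends. -/
def TwoEnded (E : V → V → Prop) : Prop :=
  DConnected E ∧
  (∀ S : Set V, S.Finite → ∀ u v w : V, InfComp E S u → InfComp E S v → InfComp E S w →
    ReachAvoid E S u v ∨ ReachAvoid E S u w ∨ ReachAvoid E S v w) ∧
  ∃ S : Set V, S.Finite ∧ ∃ u v : V, InfComp E S u ∧ InfComp E S v ∧ ¬ ReachAvoid E S u v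

/-- The stabilizer of a vertex `v` in the automorphism group. -/
def vStab (E : V → V → Prop) (v : V) : Subgroup (autGroup E) where
  carrier := {g | (g : Equiv.Perm V) v = v}
  one_mem' := rfl
  mul_mem' := by
    intro a b ha hb
    simp only [Set.mem_setOf_eq] at *
    simp [Subgroup.coe_mul, Equiv.Perm.mul_apply, ha, hb]
  inv_mem' := by
    intro a ha
    simp only [Set.mem_setOf_eq] at *
    have := congrArg (((a : Equiv.Perm V))⁻¹ : Equiv.Perm V) ha
    simpa using this.symm

def outSet (E : V → V → Prop) (v : V) : Set V := {u | E v u}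
def inSet (E : V → V → Prop) (v : V) : Set V := {u | E u v}

/-- The stabilizer of `v` acts quasi-primitively on the set `Ω`. -/
def QuasiPrimitivelyOn (E : V → V → Prop) (v : V) (Ω : Set V) : Prop :=
  (∀ u ∈ Ω, ∀ w ∈ Ω, ∃ g ∈ vStab E v, ((g : autGroup E) : Equiv.Perm V) u = w) ∧
  (∀ N : Subgroup (vStab E v), N.Normal →
    (∀ n ∈ N, ∀ u ∈ Ω, (((n : vStab E v) : autGroup E) : Equiv.Perm V) u = u) ∨
    (∀ u ∈ Ω, ∀ w ∈ Ω, ∃ n ∈ N, (((n : vStab E v) : autGroup E) : Equiv.Perm V) u = w))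

/-! An automorphism shifts the grading `φ` by a constant, so `g`, which fixes the fibre `Γ₀`,
preserves every fibre, and keeping `g` on one side of `Γ₀` and the identity on the other gives a
non-trivial automorphism fixing a half-space `{φ ≤ c}` pointwise (after reversing all arcs if `g`
only moves vertices below `Γ₀`). Let `m + 1` be the lowest level it moves and `v` an in-neighbour of
a moved vertex of that level. The automorphisms fixing every level `≤ m` form a normal subgroup of
the stabilizer of `v` which acts non-trivially on the out-neighbours of `v`; the stabilizer is
transitive on these `p` vertices, hence primitive, so this normal subgroup is transitive on them.
Conjugating, at every vertex `v` the automorphisms fixing all levels `≤ φ v` are transitive on the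
out-neighbours of `v`, which is exactly what is needed to extend an automorphism matching two
`k`-arcs to their `(k + 1)`-arc extensions. -/

open MulAction Equiv.Perm

lemma autGroup_flip (E : V → V → Prop) : autGroup (flip E) = autGroup E := by
  ext g
  exact ⟨fun hg u v => hg v u, fun hg u v => hg v u⟩

lemma DConnected.flip {E : V → V → Prop} (h : DConnected E) : DConnected (flip E) :=
  fun u v => Relation.ReflTransGen.mono (fun _ _ => Or.symm) _ _ (h u v)

lemma ArcTransitive.flip {E : V → V → Prop} (h : ArcTransitive E) : ArcTransitive (flip E) := by
  intro u v x y huv hxy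
  obtain ⟨a, ha, hau, hav⟩ := h v u y x huv hxy
  exact ⟨a, autGroup_flip E ▸ ha, hav, hau⟩

lemma IsKArc.comp_rev {E : V → V → Prop} {k : ℕ} {f : Fin (k + 1) → V} (hf : IsKArc E k f) :
    IsKArc (flip E) k (f ∘ Fin.rev) := by
  intro i
  simpa [flip, Fin.rev_succ, Fin.rev_castSucc] using hf i.rev

lemma IsKArc.init {E : V → V → Prop} {k : ℕ} {f : Fin (k + 2) → V} (hf : IsKArc E (k + 1) f) :
    IsKArc E k (Fin.init f) :=
  fun i => by simpa [Fin.init] using hf i.castSucc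

lemma HighlyArcTransitive.of_flip {E : V → V → Prop} (h : HighlyArcTransitive (flip E)) :
    HighlyArcTransitive E := by
  intro k f g hf hg
  obtain ⟨a, ha, hfg⟩ := h k _ _ hf.comp_rev hg.comp_rev
  exact ⟨a, autGroup_flip E ▸ ha, fun i => by simpa using hfg i.rev⟩

lemma ArcTransitive.vertexTransitive {E : V → V → Prop} (h : ArcTransitive E)
    (hout : ∀ v, (outSet E v).Nonempty) : VertexTransitive E := by
  intro u v
  obtain ⟨u', hu'⟩ := hout u
  obtain ⟨v', hv'⟩ := hout v
  obtain ⟨a, ha, hau, -⟩ := h u u' v v' hu' hv'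
  exact ⟨a, ha, hau⟩

def levelFixer (E : V → V → Prop) (φ : V → ℤ) (m : ℤ) : Subgroup (autGroup E) :=
  fixingSubgroup (autGroup E) {x | φ x ≤ m}

def outNbrs (E : V → V → Prop) (v : V) : SubMulAction (stabilizer (autGroup E) v) V where
  carrier := outSet E v
  smul_mem' a u hu := by
    have hav : (a : Equiv.Perm V) v = v := a.2
    simpa [outSet, Subgroup.smul_def, Equiv.Perm.smul_def, hav] using (a.1.2 v u).1 hu

section Graded

variable {E : V → V → Prop} {φ : V → ℤ}

lemma grading_apply_sub_eq (hconn : DConnected E) (hφ : ∀ u v, E u v → φ v = φ u + 1)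
    {a : Equiv.Perm V} (ha : a ∈ autGroup E) (x y : V) :
    φ (a x) - φ x = φ (a y) - φ y := by
  induction hconn x y with
  | refl => rfl
  | tail _ hbc ih =>
    rcases hbc with hbc | hbc <;>
    · have := hφ _ _ hbc
      have := hφ _ _ ((ha _ _).1 hbc)
      omega

lemma IsKArc.strictMono_grading (hφ : ∀ u v, E u v → φ v = φ u + 1) {k : ℕ}
    {f : Fin (k + 1) → V} (hf : IsKArc E k f) : StrictMono (φ ∘ f) :=
  Fin.strictMono_iff_lt_succ.2 fun i => by simp [hφ _ _ (hf i)]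

lemma mem_levelFixer {m : ℤ} {n : autGroup E} :
    n ∈ levelFixer E φ m ↔ ∀ x, φ x ≤ m → (n : Equiv.Perm V) x = x := by
  simp [levelFixer, mem_fixingSubgroup_iff, Subgroup.smul_def, Equiv.Perm.smul_def]

lemma conj_mem_levelFixer (hconn : DConnected E) (hφ : ∀ u v, E u v → φ v = φ u + 1)
    (a : autGroup E) {n : autGroup E} {y : V} (hn : n ∈ levelFixer E φ (φ y)) :
    a * n * a⁻¹ ∈ levelFixer E φ (φ ((a : Equiv.Perm V) y)) := by
  rw [mem_levelFixer] at hn ⊢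
  intro x hx
  have hshift := grading_apply_sub_eq hconn hφ a.2 ((a : Equiv.Perm V)⁻¹ x) y
  simp only [Equiv.Perm.coe_inv, Equiv.apply_symm_apply] at hshift
  simp only [Subgroup.coe_mul, Subgroup.coe_inv, Equiv.Perm.mul_apply, Equiv.Perm.coe_inv]
  rw [hn _ (by omega), Equiv.apply_symm_apply]

lemma exists_mem_autGroup_eqOn_above (hφ : ∀ u v, E u v → φ v = φ u + 1)
    {g : Equiv.Perm V} (hg : g ∈ autGroup E) (hgφ : ∀ x, φ (g x) = φ x) {c : ℤ}
    (hgc : ∀ x, φ x = c → g x = x) :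
    ∃ h ∈ autGroup E, (∀ x, φ x ≤ c → h x = x) ∧ ∀ x, c < φ x → h x = g x := by
  classical
  set h := ofSubtype (g.subtypePerm (p := (c < φ ·)) fun x => by rw [hgφ])
  have hlow : ∀ x, φ x ≤ c → h x = x := fun x hx =>
    ofSubtype_subtypePerm_of_not_mem _ (not_lt.2 hx)
  have hhigh : ∀ x, c < φ x → h x = g x := fun x hx => ofSubtype_subtypePerm_of_mem _ hx
  have hhφ : ∀ x, φ (h x) = φ x := fun x => by
    rcases le_or_gt (φ x) c with hx | hx
    · rw [hlow x hx]
    · rw [hhigh x hx, hgφ]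
  refine ⟨h, fun u v => ?_, hlow, hhigh⟩
  by_cases huv : φ v = φ u + 1
  · rcases lt_or_ge c (φ u) with hu | hu
    · rw [hhigh u hu, hhigh v (by omega)]
      exact hg u v
    rcases lt_or_ge c (φ v) with hv | hv
    · rw [hlow u hu, hhigh v hv]
      exact (hg u v).trans (by rw [hgc u (by omega)])
    · rw [hlow u hu, hlow v hv]
  · refine iff_of_false (fun huv' => huv (hφ _ _ huv')) fun huv' => huv ?_
    simpa only [hhφ] using hφ _ _ huv'

lemma exists_lowest_moved_level {h : Equiv.Perm V} {c : ℤ} (hc : ∀ x, φ x ≤ c → h x = x)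
    (hne : h ≠ 1) : ∃ m, (∀ x, φ x ≤ m → h x = x) ∧ ∃ x, φ x = m + 1 ∧ h x ≠ x := by
  obtain ⟨x₀, hx₀⟩ : ∃ x, h x ≠ x := by
    by_contra! H
    exact hne (Equiv.ext H)
  obtain ⟨l, ⟨x, hxl, hx⟩, hmin⟩ :=
    Int.exists_least_of_bdd (P := fun l => ∃ x, φ x = l ∧ h x ≠ x)
      ⟨c + 1, fun l ⟨x, hxl, hx⟩ => by by_contra! H; exact hx (hc x (by omega))⟩
      ⟨_, x₀, rfl, hx₀⟩
  refine ⟨l - 1, fun y hy => ?_, x, by omega, hx⟩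
  by_contra hy'
  have := hmin _ ⟨y, rfl, hy'⟩
  omega

lemma exists_mem_levelFixer_apply_eq (hconn : DConnected E)
    (hφ : ∀ u v, E u v → φ v = φ u + 1) (hat : ArcTransitive E) {v : V}
    (hv : (outSet E v).ncard.Prime)
    (hmove : ∃ n ∈ levelFixer E φ (φ v), ∃ u, E v u ∧ (n : Equiv.Perm V) u ≠ u)
    {u w : V} (hu : E v u) (hw : E v w) :
    ∃ n ∈ levelFixer E φ (φ v), (n : Equiv.Perm V) u = w := by
  let H := stabilizer (autGroup E) v
  let N : Subgroup H := (levelFixer E φ (φ v)).subgroupOf H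
  have : IsPretransitive H (outNbrs E v) := ⟨fun ⟨x, hx⟩ ⟨y, hy⟩ => by
    obtain ⟨a, ha, hav, hax⟩ := hat v x v y hx hy
    exact ⟨⟨⟨a, ha⟩, hav⟩, Subtype.ext hax⟩⟩
  have : IsPreprimitive H (outNbrs E v) := IsPreprimitive.of_prime_card hv
  have : N.Normal := ⟨fun n hn a => by
    have hav : ((a : autGroup E) : Equiv.Perm V) v = v := a.2
    simpa [N, Subgroup.mem_subgroupOf, hav] using conj_mem_levelFixer hconn hφ a hn⟩
  have hN : fixedPoints N (outNbrs E v) ≠ Set.univ := by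
    obtain ⟨n, hn, x, hx, hnx⟩ := hmove
    have hnv : n ∈ H := (mem_levelFixer.1 hn) v le_rfl
    refine Set.ne_univ_iff_exists_notMem _ |>.2 ⟨⟨x, hx⟩, fun hfix => hnx ?_⟩
    exact congrArg Subtype.val (hfix ⟨⟨n, hnv⟩, hn⟩)
  obtain ⟨n, hn⟩ := (IsQuasiPreprimitive.isPretransitive_of_normal hN).exists_smul_eq
    (⟨u, hu⟩ : outNbrs E v) ⟨w, hw⟩
  exact ⟨n, n.2, congrArg Subtype.val hn⟩

lemma highlyArcTransitive_of_exists_mem_levelFixer (hφ : ∀ u v, E u v → φ v = φ u + 1)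
    (hvt : VertexTransitive E)
    (htrans : ∀ v u w, E v u → E v w → ∃ n ∈ levelFixer E φ (φ v), (n : Equiv.Perm V) u = w) :
    HighlyArcTransitive E := by
  intro k
  induction k with
  | zero =>
    intro f g _ _
    obtain ⟨a, ha, hfg⟩ := hvt (f 0) (g 0)
    exact ⟨a, ha, fun i => by rwa [Fin.fin_one_eq_zero i]⟩
  | succ k ih =>
    intro f g hf hg
    obtain ⟨a, ha, hfg⟩ := ih _ _ hf.init hg.init
    have hlast : E (a (f (Fin.last k).castSucc)) (a (f (Fin.last (k + 1)))) :=
      (ha _ _).1 (by simpa using hf (Fin.last k))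
    rw [show a (f (Fin.last k).castSucc) = g (Fin.last k).castSucc from hfg _] at hlast
    obtain ⟨n, hn, hna⟩ := htrans _ _ _ hlast (by simpa using hg (Fin.last k))
    refine ⟨n * a, (autGroup E).mul_mem n.2 ha, Fin.lastCases ?_ fun j => ?_⟩
    · exact hna
    · have hj : φ (g j.castSucc) ≤ φ (g (Fin.last k).castSucc) :=
        (hg.strictMono_grading hφ).monotone (Fin.castSucc_le_castSucc_iff.2 (Fin.le_last j))
      simp only [Equiv.Perm.mul_apply]
      rw [show a (f j.castSucc) = g j.castSucc from hfg j, mem_levelFixer.1 hn _ hj]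

lemma highlyArcTransitive_of_fixes_le (hconn : DConnected E)
    (hφ : ∀ u v, E u v → φ v = φ u + 1) (hat : ArcTransitive E)
    (hout : ∀ v, (outSet E v).ncard.Prime) {h : Equiv.Perm V} (hh : h ∈ autGroup E) {c : ℤ}
    (hc : ∀ x, φ x ≤ c → h x = x) (hne : h ≠ 1) :
    HighlyArcTransitive E := by
  have hvt := hat.vertexTransitive fun v => Set.nonempty_of_ncard_ne_zero (hout v).ne_zero
  obtain ⟨m, hm, x, hxm, hx⟩ := exists_lowest_moved_level hc hne
  obtain ⟨v₀, hv₀x⟩ : ∃ v₀, E v₀ x := by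
    obtain ⟨y, hxy⟩ := Set.nonempty_of_ncard_ne_zero (hout x).ne_zero
    obtain ⟨a, ha, hay⟩ := hvt y x
    exact ⟨a x, by simpa [hay] using (ha x y).1 hxy⟩
  have hh₀ : (⟨h, hh⟩ : autGroup E) ∈ levelFixer E φ (φ v₀) :=
    mem_levelFixer.2 fun y hy => hm y (by have := hφ _ _ hv₀x; omega)
  refine highlyArcTransitive_of_exists_mem_levelFixer hφ hvt fun v u w hu hw => ?_
  obtain ⟨a, ha, hav⟩ := hvt v₀ v
  refine exists_mem_levelFixer_apply_eq hconn hφ hat (hout v) ?_ hu hw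
  refine ⟨_, hav ▸ conj_mem_levelFixer hconn hφ ⟨a, ha⟩ hh₀, a x,
    hav ▸ (ha _ _).1 hv₀x, ?_⟩
  simpa [Equiv.Perm.mul_apply] using hx

lemma highlyArcTransitive_of_moves_above (hconn : DConnected E)
    (hφ : ∀ u v, E u v → φ v = φ u + 1) (hat : ArcTransitive E)
    (hout : ∀ v, (outSet E v).ncard.Prime) {g : Equiv.Perm V} (hg : g ∈ autGroup E)
    (hgφ : ∀ x, φ (g x) = φ x) {c : ℤ} (hgc : ∀ x, φ x = c → g x = x) {x : V} (hx : c < φ x)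
    (hgx : g x ≠ x) :
    HighlyArcTransitive E := by
  obtain ⟨h, hh, hlow, hhigh⟩ := exists_mem_autGroup_eqOn_above hφ hg hgφ hgc
  refine highlyArcTransitive_of_fixes_le hconn hφ hat hout hh hlow ?_
  rintro rfl
  exact hgx (hhigh x hx).symm

end Graded

/-- Let `Γ` be a connected arc-transitive digraph with Property Z whose
in- and out-valencies are both prime.  If the pointwise stabilizer of the fibre `Γ₀` is
non-trivial, then `Γ` is highly-arc-transitive. -/
theorem highly_arc_transitive_of_prime_valencies
    {V : Type*} (E : V → V → Prop)
    (hconn : DConnected E) (hat : ArcTransitive E)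
    (φ : V → ℤ) (hsurj : Function.Surjective φ)
    (hhom : ∀ u v : V, E u v → φ v = φ u + 1)
    (p q : ℕ) (hp : p.Prime) (hq : q.Prime)
    (hout : ∀ v : V, (outSet E v).ncard = p)
    (hin : ∀ v : V, (inSet E v).ncard = q)
    (hnt : ∃ g : Equiv.Perm V, g ∈ autGroup E ∧ (∀ x : V, φ x = 0 → g x = x) ∧ g ≠ 1) :
    HighlyArcTransitive E := by
  obtain ⟨g, hg, hg₀, hne⟩ := hnt
  obtain ⟨x₀, hx₀⟩ := hsurj 0
  have hgφ : ∀ x, φ (g x) = φ x := fun x => by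
    have := grading_apply_sub_eq hconn hhom hg x x₀
    rw [hg₀ x₀ hx₀] at this
    omega
  obtain ⟨x, hx⟩ : ∃ x, g x ≠ x := by
    by_contra! H
    exact hne (Equiv.ext H)
  rcases lt_or_gt_of_ne (fun h₀ => hx (hg₀ x h₀) : φ x ≠ 0) with hneg | hpos
  · refine .of_flip <| highlyArcTransitive_of_moves_above (φ := (-φ ·)) hconn.flip
      (fun u v huv => by simp [hhom v u huv]) hat.flip
      (fun v => show (inSet E v).ncard.Prime from hin v ▸ hq) ((autGroup_flip E).symm ▸ hg)
      (by simp [hgφ]) (c := 0) (by simpa using hg₀) (by omega) hx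
  · exact highlyArcTransitive_of_moves_above hconn hhom hat (fun v => hout v ▸ hp) hg hgφ hg₀
      hpos hx
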